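/- For every natural number n and every λ-term θ β-equivalent to the Church numeral n̲, the head reduction of (T₂)θf reaches the head normal form (f)(s̲)ⁿ0̲, where T₂ = λn λf (((n)f)F)0̲ with F = λx λy (x)(s̲)y. -/

import Mathlib

/- Untyped λ-calculus with de Bruijn indices, head reduction, Church numerals. -/

inductive Lam : Type
  | var : ℕ → Lam
  | app : Lam → Lam → Lam
  | lam : Lam → Lam
deriving DecidableEq, Repr

namespace Lam

/-- Shift free variables `≥ c` up by 1. -/
def lift (c : ℕ) : Lam → Lam
  | var n => if n < c then var n else var (n + 1)
  | app s t => app (s.lift c) (t.lift c)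
  | lam t => lam (t.lift (c + 1))

/-- Push a substitution under a binder. -/
def up (σ : ℕ → Lam) : ℕ → Lam
  | 0 => var 0
  | n + 1 => (σ n).lift 0

/-- Capture-avoiding simultaneous substitution. -/
def subst (σ : ℕ → Lam) : Lam → Lam
  | var n => σ n
  | app s t => app (s.subst σ) (t.subst σ)
  | lam t => lam (t.subst (up σ))

/-- `t.subst0 u` is `t[u/0]`, the β-contractum substitution. -/
def subst0 (t u : Lam) : Lam :=
  t.subst (fun n => match n with | 0 => u | n + 1 => var n)

/-- `m` occurs free in the term. -/
def FreeIn (m : ℕ) : Lam → Prop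
  | var n => n = m
  | app s t => s.FreeIn m ∨ t.FreeIn m
  | lam t => t.FreeIn (m + 1)

/-- A closed λ-term. -/
def Closed (t : Lam) : Prop := ∀ m, ¬ t.FreeIn m

end Lam

/-- One-step β-reduction (anywhere in the term). -/
inductive Beta : Lam → Lam → Prop
  | beta (t u) : Beta (.app (.lam t) u) (t.subst0 u)
  | appL {s s'} (t) : Beta s s' → Beta (.app s t) (.app s' t)
  | appR {t t'} (s) : Beta t t' → Beta (.app s t) (.app s t')
  | lam {t t'} : Beta t t' → Beta (.lam t) (.lam t')

/-- β-equivalence `≃β`. -/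
def BetaEq : Lam → Lam → Prop := Relation.EqvGen Beta

/-- A term in (β-)normal form. -/
def NormalForm (t : Lam) : Prop := ∀ u, ¬ Beta t u

/-- One step of head reduction: reduce the head redex. -/
inductive HStep : Lam → Lam → Prop
  | beta (t u) : HStep (.app (.lam t) u) (t.subst0 u)
  | lam {t t'} : HStep t t' → HStep (.lam t) (.lam t')
  | app {t t'} (u) : HStep t t' → (∀ s, t ≠ .lam s) → HStep (.app t u) (.app t' u)

/-- `HRedN k u v` : `u ≻ v` by a head reduction of length `h(u,v) = k`. -/
inductive HRedN : ℕ → Lam → Lam → Prop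
  | refl (t) : HRedN 0 t t
  | step {k t u v} : HStep t u → HRedN k u v → HRedN (k + 1) t v

/-- `u ≻ v` : `v` is obtained from `u` by head reduction. -/
def HRed (t u : Lam) : Prop := ∃ k, HRedN k t u

/-- Head normal form: no head redex. -/
def HeadNormal (t : Lam) : Prop := ∀ u, ¬ HStep t u

/-- Solvable: the head reduction terminates. -/
def Solvable (t : Lam) : Prop := ∃ v, HRed t v ∧ HeadNormal v

/-- `(t)u₁…uₙ` : iterated application. -/
def appList : Lam → List Lam → Lam
  | t, [] => t
  | t, u :: us => appList (t.app u) us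

/-- `(f)ⁿ x` with `x = var 1`, `f = var 0`. -/
def churchBody : ℕ → Lam
  | 0 => .var 1
  | n + 1 => .app (.var 0) (churchBody n)

/-- Church numeral `n̲ = λx λf (f)ⁿ x`. -/
def church (n : ℕ) : Lam := .lam (.lam (churchBody n))

/-- `0̲ = λx λf x`. -/
def czero : Lam := .lam (.lam (.var 1))

/-- `s̲ = λn λx λf (f)((n)x)f`. -/
def csucc : Lam := .lam (.lam (.lam (.app (.var 0) (.app (.app (.var 2) (.var 1)) (.var 0)))))

/-- `(s̲)ⁿ 0̲`. -/
def succIter : ℕ → Lam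
  | 0 => czero
  | n + 1 => .app csucc (succIter n)

/-- `G = λx λy (x) λz (y)(s̲)z`. -/
def Gop : Lam := .lam (.lam (.app (.var 1) (.lam (.app (.var 1) (.app csucc (.var 0))))))

/-- `δ = λf (f)0̲`. -/
def deltaOp : Lam := .lam (.app (.var 0) czero)

/-- `T₁ = λn ((n)δ)G`. -/
def T1 : Lam := .lam (.app (.app (.var 0) deltaOp) Gop)

/-- `F = λx λy (x)(s̲)y`. -/
def Fop : Lam := .lam (.lam (.app (.var 1) (.app csucc (.var 0))))

/-- `T₂ = λn λf (((n)f)F)0̲`. -/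
def T2 : Lam := .lam (.lam (.app (.app (.app (.var 1) (.var 0)) Fop) czero))

/-- `θ₀ = λx λf λz (x)(λd z)(λx x)`. -/
def theta0 : Lam := .lam (.lam (.lam (.app (.app (.var 2) (.lam (.var 1))) (.lam (.var 0)))))

/-- `T` is a storage operator for the integers (the fixed variable `f` is `var 0`). -/
def IsStorage (T : Lam) : Prop :=
  ∀ n : ℕ, ∃ τ : Lam, BetaEq τ (church n) ∧
    ∀ θ : Lam, BetaEq θ (church n) →
      ∃ σ : ℕ → Lam, HRed (.app (.app T θ) (.var 0)) (.app (.var 0) (τ.subst σ))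

/-
Head reduction of `(T₂)θf` only inspects head shapes of terms β-equivalent to parts of `n̲`.
By Church–Rosser (through complete developments) and Takahashi's standardisation (a parallel step
splits into weak head steps followed by an internal step, and internal steps can be postponed
after weak head ones), a term β-equivalent to a variable, to `λb` or to `(x)e` weak-head reduces
to a term of the same shape whose body is β-equivalent to `b`, resp. `e`. Hence
`(T₂)θf ≻ (((θ)f)F)0̲ ≻ (u)0̲` with `u ≃β (F)ⁿf`, and `((F)ᵏ⁺¹f)ν ≻ ((F)ᵏf)(s̲)ν` peels off one
`F` at a time until `(f)(s̲)ⁿ0̲` is reached.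
-/

open Relation

namespace Lam

def upRen (r : ℕ → ℕ) : ℕ → ℕ
  | 0 => 0
  | n + 1 => r n + 1

def ren (r : ℕ → ℕ) : Lam → Lam
  | var n => var (r n)
  | app s t => app (s.ren r) (t.ren r)
  | lam t => lam (t.ren (upRen r))

def single (u : Lam) : ℕ → Lam
  | 0 => u
  | n + 1 => var n

theorem subst0_eq_subst_single (t u : Lam) : t.subst0 u = t.subst (single u) := rfl

theorem lift_eq_ren (t : Lam) (c : ℕ) :
    t.lift c = t.ren (fun n => if n < c then n else n + 1) := by
  induction t generalizing c with
  | var n => simp only [lift, ren]; split <;> rfl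
  | app a b iha ihb => simp only [lift, ren, iha, ihb]
  | lam a ih =>
    simp only [lift, ren, ih]
    congr 2
    funext n
    cases n <;> simp only [upRen] <;> split_ifs <;> omega

theorem lift_zero_eq_ren (t : Lam) : t.lift 0 = t.ren (· + 1) := by
  simp [lift_eq_ren]

theorem ren_ren (t : Lam) (r s : ℕ → ℕ) : (t.ren r).ren s = t.ren (s ∘ r) := by
  induction t generalizing r s with
  | var n => rfl
  | app a b iha ihb => simp only [ren, iha, ihb]
  | lam a ih =>
    simp only [ren, ih]
    congr 2
    funext n
    cases n <;> rfl

theorem subst_ren (t : Lam) (r : ℕ → ℕ) (σ : ℕ → Lam) :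
    (t.ren r).subst σ = t.subst (σ ∘ r) := by
  induction t generalizing r σ with
  | var n => rfl
  | app a b iha ihb => simp only [ren, subst, iha, ihb]
  | lam a ih =>
    simp only [ren, subst, ih]
    congr 2
    funext n
    cases n <;> rfl

theorem ren_subst (t : Lam) (σ : ℕ → Lam) (r : ℕ → ℕ) :
    (t.subst σ).ren r = t.subst (ren r ∘ σ) := by
  induction t generalizing σ r with
  | var n => rfl
  | app a b iha ihb => simp only [subst, ren, iha, ihb]
  | lam a ih =>
    simp only [subst, ren, ih]
    congr 2
    funext n
    cases n with
    | zero => rfl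
    | succ n => simp only [Function.comp, up, lift_zero_eq_ren, ren_ren]; rfl

theorem subst_subst (t : Lam) (σ τ : ℕ → Lam) :
    (t.subst σ).subst τ = t.subst (fun n => (σ n).subst τ) := by
  induction t generalizing σ τ with
  | var n => rfl
  | app a b iha ihb => simp only [subst, iha, ihb]
  | lam a ih =>
    simp only [subst, ih]
    congr 2
    funext n
    cases n with
    | zero => rfl
    | succ n =>
      simp only [up, lift_zero_eq_ren, subst_ren, ren_subst]
      congr 1
      funext m
      exact lift_zero_eq_ren (τ m)

theorem subst_var (t : Lam) : t.subst var = t := by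
  induction t with
  | var n => rfl
  | app a b iha ihb => simp only [subst, iha, ihb]
  | lam a ih =>
    have : up var = var := by
      funext n
      cases n <;> rfl
    simp only [subst, this, ih]

theorem lift_zero_subst0 (t u : Lam) : (t.lift 0).subst0 u = t := by
  rw [lift_zero_eq_ren, subst0_eq_subst_single, subst_ren]
  exact subst_var t

theorem subst0_subst (t u : Lam) (σ : ℕ → Lam) :
    (t.subst0 u).subst σ = (t.subst (up σ)).subst0 (u.subst σ) := by
  simp only [subst0_eq_subst_single, subst_subst]
  congr 1
  funext n
  cases n with
  | zero => rfl
  | succ n => exact (lift_zero_subst0 (σ n) (u.subst σ)).symm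

theorem subst0_ren (t u : Lam) (r : ℕ → ℕ) :
    (t.subst0 u).ren r = (t.ren (upRen r)).subst0 (u.ren r) := by
  simp only [subst0_eq_subst_single, ren_subst, subst_ren]
  congr 1
  funext n
  cases n <;> rfl

end Lam

theorem Beta.subst {t u : Lam} (h : Beta t u) (σ : ℕ → Lam) : Beta (t.subst σ) (u.subst σ) := by
  induction h generalizing σ with
  | beta a b => rw [Lam.subst0_subst]; exact .beta _ _
  | appL t _ ih => exact .appL _ (ih σ)
  | appR s _ ih => exact .appR _ (ih σ)
  | lam _ ih => exact .lam (ih _)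

theorem BetaEq.subst {t u : Lam} (h : BetaEq t u) (σ : ℕ → Lam) :
    BetaEq (t.subst σ) (u.subst σ) := by
  induction h with
  | rel a b hab => exact .rel _ _ (hab.subst σ)
  | refl a => exact .refl _
  | symm a b _ ih => exact .symm _ _ ih
  | trans a b c _ _ ih ih' => exact .trans _ _ _ ih ih'

inductive Par : Lam → Lam → Prop
  | var (n : ℕ) : Par (.var n) (.var n)
  | lam {a a' : Lam} : Par a a' → Par (.lam a) (.lam a')
  | app {a a' b b' : Lam} : Par a a' → Par b b' → Par (.app a b) (.app a' b')
  | beta {a a' b b' : Lam} : Par a a' → Par b b' → Par (.app (.lam a) b) (a'.subst0 b')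

namespace Par

theorem refl (t : Lam) : Par t t := by
  induction t with
  | var n => exact .var n
  | app a b iha ihb => exact .app iha ihb
  | lam a ih => exact .lam ih

theorem ren {t u : Lam} (h : Par t u) (r : ℕ → ℕ) : Par (t.ren r) (u.ren r) := by
  induction h generalizing r with
  | var n => exact .var _
  | lam _ ih => exact .lam (ih _)
  | app _ _ iha ihb => exact .app (iha r) (ihb r)
  | beta _ _ iha ihb => rw [Lam.subst0_ren]; exact .beta (iha _) (ihb r)

theorem up {σ τ : ℕ → Lam} (h : ∀ n, Par (σ n) (τ n)) (n : ℕ) :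
    Par (Lam.up σ n) (Lam.up τ n) := by
  cases n with
  | zero => exact .var 0
  | succ n => simp only [Lam.up, Lam.lift_zero_eq_ren]; exact (h n).ren _

theorem subst {t u : Lam} (h : Par t u) {σ τ : ℕ → Lam} (hστ : ∀ n, Par (σ n) (τ n)) :
    Par (t.subst σ) (u.subst τ) := by
  induction h generalizing σ τ with
  | var n => exact hστ n
  | lam _ ih => exact .lam (ih (up hστ))
  | app _ _ iha ihb => exact .app (iha hστ) (ihb hστ)
  | beta _ _ iha ihb => rw [Lam.subst0_subst]; exact .beta (iha (up hστ)) (ihb hστ)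

theorem single {u u' : Lam} (h : Par u u') (n : ℕ) : Par (Lam.single u n) (Lam.single u' n) := by
  cases n with
  | zero => exact h
  | succ n => exact .var n

theorem subst0 {a a' b b' : Lam} (ha : Par a a') (hb : Par b b') :
    Par (a.subst0 b) (a'.subst0 b') :=
  ha.subst (single hb)

theorem of_beta {t u : Lam} (h : Beta t u) : Par t u := by
  induction h with
  | beta a b => exact .beta (refl a) (refl b)
  | appL t _ ih => exact .app ih (refl t)
  | appR s _ ih => exact .app (refl s) ih
  | lam _ ih => exact .lam ih

theorem reflTransGen_beta {t u : Lam} (h : Par t u) : ReflTransGen Beta t u := by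
  induction h with
  | var n => rfl
  | lam _ ih => exact ReflTransGen.lift Lam.lam (fun _ _ => Beta.lam) _ _ ih
  | @app _ a' b _ _ _ iha ihb =>
    exact (ReflTransGen.lift (Lam.app · b) (fun _ _ => Beta.appL b) _ _ iha).trans
      (ReflTransGen.lift (Lam.app a') (fun _ _ => Beta.appR a') _ _ ihb)
  | @beta _ a' b b' _ _ iha ihb =>
    have hfun := ReflTransGen.lift (fun x => Lam.app (Lam.lam x) b)
      (fun _ _ h => Beta.appL b (Beta.lam h)) _ _ iha
    have harg := ReflTransGen.lift (Lam.app (Lam.lam a')) (fun _ _ => Beta.appR _) _ _ ihb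
    exact (hfun.trans harg).tail (Beta.beta a' b')

end Par

def completeDevelopment : Lam → Lam
  | .var n => .var n
  | .lam t => .lam (completeDevelopment t)
  | .app (.lam a) b => (completeDevelopment a).subst0 (completeDevelopment b)
  | .app (.var n) b => .app (.var n) (completeDevelopment b)
  | .app (.app a₁ a₂) b => .app (completeDevelopment (.app a₁ a₂)) (completeDevelopment b)

theorem Par.completeDevelopment {t u : Lam} (h : Par t u) : Par u (completeDevelopment t) := by
  induction h with
  | var n => exact .var n
  | lam _ ih => exact .lam ih
  | beta _ _ iha ihb => exact iha.subst0 ihb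
  | @app a _ _ _ ha _ iha ihb =>
    cases a with
    | var _ | app _ _ => exact .app iha ihb
    | lam _ =>
      cases ha with
      | lam ha₀ =>
        cases iha with
        | lam iha₀ => exact .beta iha₀ ihb

theorem BetaEq.exists_parS {t u : Lam} (h : BetaEq t u) :
    ∃ d, ReflTransGen Par t d ∧ ReflTransGen Par u d := by
  have hjoin := equivalence_join_reflTransGen (r := Par) fun a _ _ hb hc =>
    ⟨completeDevelopment a, .single hb.completeDevelopment, .single hc.completeDevelopment⟩
  induction h with
  | rel a b hab => exact ⟨b, .single (.of_beta hab), .refl⟩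
  | refl a => exact hjoin.refl a
  | symm a b _ ih => exact hjoin.symm ih
  | trans a b c _ _ ih ih' => exact hjoin.trans ih ih'

/-- Head steps from a non-abstraction; unlike `HStep`, they are closed under application
contexts (`WHRed.app_left`). -/
inductive WHStep : Lam → Lam → Prop
  | beta (t u : Lam) : WHStep (.app (.lam t) u) (t.subst0 u)
  | app {t t' : Lam} (u : Lam) : WHStep t t' → WHStep (.app t u) (.app t' u)

abbrev WHRed : Lam → Lam → Prop := ReflTransGen WHStep

local infix:50 " ≻ʷ " => WHRed

namespace WHStep

theorem ne_lam {t u : Lam} (h : WHStep t u) (s : Lam) : t ≠ .lam s := by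
  cases h <;> simp

theorem hStep {t u : Lam} (h : WHStep t u) : HStep t u := by
  induction h with
  | beta t u => exact .beta t u
  | app u h ih => exact .app u ih h.ne_lam

theorem subst {t u : Lam} (h : WHStep t u) (σ : ℕ → Lam) : WHStep (t.subst σ) (u.subst σ) := by
  induction h with
  | beta a b => rw [Lam.subst0_subst]; exact .beta _ _
  | app u _ ih => exact .app _ ih

end WHStep

namespace WHRed

theorem hRed {t u : Lam} (h : WHRed t u) : HRed t u := by
  induction h using ReflTransGen.head_induction_on with
  | refl => exact ⟨0, .refl _⟩
  | head hs _ ih => obtain ⟨k, hk⟩ := ih; exact ⟨k + 1, .step hs.hStep hk⟩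

theorem subst {t u : Lam} (h : WHRed t u) (σ : ℕ → Lam) : WHRed (t.subst σ) (u.subst σ) :=
  ReflTransGen.lift (Lam.subst σ) (fun _ _ hs => hs.subst σ) _ _ h

theorem app_left {t u : Lam} (h : WHRed t u) (v : Lam) : WHRed (.app t v) (.app u v) :=
  ReflTransGen.lift (Lam.app · v) (fun _ _ => WHStep.app v) _ _ h

end WHRed

/-- Parallel reduction of a non-abstraction leaving its weak head redex, if any, uncontracted. -/
inductive SpinePar : Lam → Lam → Prop
  | var (n : ℕ) : SpinePar (.var n) (.var n)
  | redex {a a' b b' : Lam} : Par a a' → Par b b' → SpinePar (.app (.lam a) b) (.app (.lam a') b')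
  | app {m n a b : Lam} : SpinePar m n → Par a b → SpinePar (.app m a) (.app n b)

/-- Internal parallel reduction: parallel reduction leaving the weak head redex uncontracted. -/
inductive IPar : Lam → Lam → Prop
  | spine {m n : Lam} : SpinePar m n → IPar m n
  | lam {a b : Lam} : Par a b → IPar (.lam a) (.lam b)

theorem IPar.spinePar_app {m n a b : Lam} (h : IPar m n) (hab : Par a b) :
    SpinePar (.app m a) (.app n b) := by
  cases h with
  | spine h => exact .app h hab
  | lam h => exact .redex h hab

theorem SpinePar.exists_whRed_subst {m n : Lam} (h : SpinePar m n) {σ σ' : ℕ → Lam}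
    (hσ : ∀ i, Par (σ i) (σ' i)) (hσ' : ∀ i, ∃ L, WHRed (σ i) L ∧ IPar L (σ' i)) :
    ∃ L, WHRed (m.subst σ) L ∧ IPar L (n.subst σ') := by
  induction h with
  | var i => exact hσ' i
  | redex ha hb => exact ⟨_, .refl, .spine (.redex (ha.subst (Par.up hσ)) (hb.subst hσ))⟩
  | app _ hab ih =>
    obtain ⟨L, hL, hLn⟩ := ih
    exact ⟨_, hL.app_left _, .spine (hLn.spinePar_app (hab.subst hσ))⟩

theorem IPar.exists_whRed_subst {m n : Lam} (h : IPar m n) {σ σ' : ℕ → Lam}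
    (hσ : ∀ i, Par (σ i) (σ' i)) (hσ' : ∀ i, ∃ L, WHRed (σ i) L ∧ IPar L (σ' i)) :
    ∃ L, WHRed (m.subst σ) L ∧ IPar L (n.subst σ') := by
  cases h with
  | spine h => exact h.exists_whRed_subst hσ hσ'
  | lam h => exact ⟨_, .refl, .lam (h.subst (Par.up hσ))⟩

theorem Par.exists_whRed_iPar {m n : Lam} (h : Par m n) : ∃ L, WHRed m L ∧ IPar L n := by
  induction h with
  | var n => exact ⟨_, .refl, .spine (.var n)⟩
  | lam h => exact ⟨_, .refl, .lam h⟩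
  | app _ hb iha =>
    obtain ⟨L, hL, hLn⟩ := iha
    exact ⟨_, hL.app_left _, .spine (hLn.spinePar_app hb)⟩
  | @beta a a' b b' _ hb iha ihb =>
    obtain ⟨La, hLa, hLa'⟩ := iha
    obtain ⟨Lb, hLb, hLb'⟩ := ihb
    have hσ' : ∀ i, ∃ L, WHRed (Lam.single b i) L ∧ IPar L (Lam.single b' i) := by
      intro i
      cases i with
      | zero => exact ⟨Lb, hLb, hLb'⟩
      | succ i => exact ⟨_, .refl, .spine (.var i)⟩
    obtain ⟨L, hL, hLn⟩ := hLa'.exists_whRed_subst (Par.single hb) hσ'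
    exact ⟨L, .head (.beta a b) ((hLa.subst _).trans hL), hLn⟩

theorem SpinePar.exists_whRed_par_of_whStep {m n n' : Lam} (h : SpinePar m n)
    (hn : WHStep n n') : ∃ m', WHRed m m' ∧ Par m' n' := by
  induction h generalizing n' with
  | var n => cases hn
  | @redex a a' b b' ha hb =>
    cases hn with
    | beta => exact ⟨_, .single (.beta a b), ha.subst0 hb⟩
    | app _ hs => cases hs
  | app h hab ih =>
    cases hn with
    | beta => cases h
    | app _ hs =>
      obtain ⟨m', hm', hm'n⟩ := ih hs
      exact ⟨_, hm'.app_left _, .app hm'n hab⟩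

theorem IPar.exists_whRed_iPar_of_whStep {m n n' : Lam} (h : IPar m n) (hn : WHStep n n') :
    ∃ L, WHRed m L ∧ IPar L n' := by
  cases h with
  | spine h =>
    obtain ⟨m', hm', hm'n⟩ := h.exists_whRed_par_of_whStep hn
    obtain ⟨L, hL, hLn⟩ := hm'n.exists_whRed_iPar
    exact ⟨L, hm'.trans hL, hLn⟩
  | lam h => cases hn

theorem IPar.exists_whRed_iPar_of_whRed {m n n' : Lam} (h : IPar m n) (hn : WHRed n n') :
    ∃ L, WHRed m L ∧ IPar L n' := by
  induction hn with
  | refl => exact ⟨m, .refl, h⟩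
  | tail _ hs ih =>
    obtain ⟨L₁, hL₁, hL₁n⟩ := ih
    obtain ⟨L, hL, hLn⟩ := hL₁n.exists_whRed_iPar_of_whStep hs
    exact ⟨L, hL₁.trans hL, hLn⟩

theorem exists_whRed_iParS_of_iParS_of_whRed {m n n' : Lam} (h : ReflTransGen IPar m n)
    (hn : WHRed n n') : ∃ L, WHRed m L ∧ ReflTransGen IPar L n' := by
  induction h using ReflTransGen.head_induction_on with
  | refl => exact ⟨n', hn, .refl⟩
  | head hm _ ih =>
    obtain ⟨L₁, hL₁, hL₁n⟩ := ih
    obtain ⟨L, hL, hLL₁⟩ := hm.exists_whRed_iPar_of_whRed hL₁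
    exact ⟨L, hL, .head hLL₁ hL₁n⟩

theorem exists_whRed_iParS_of_parS {t u : Lam} (h : ReflTransGen Par t u) :
    ∃ L, WHRed t L ∧ ReflTransGen IPar L u := by
  induction h with
  | refl => exact ⟨t, .refl, .refl⟩
  | tail _ hp ih =>
    obtain ⟨L₁, hL₁, hL₁u⟩ := ih
    obtain ⟨L₂, hL₂, hL₂u⟩ := hp.exists_whRed_iPar
    obtain ⟨L, hL, hLL₂⟩ := exists_whRed_iParS_of_iParS_of_whRed hL₁u hL₂
    exact ⟨L, hL₁.trans hL, hLL₂.tail hL₂u⟩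

theorem BetaEq.of_parS_of_parS {a b d : Lam} (ha : ReflTransGen Par a d)
    (hb : ReflTransGen Par b d) : BetaEq a b := by
  have hβ : ∀ {x y}, ReflTransGen Par x y → BetaEq x y := fun h =>
    EqvGen.reflTransGen_le_eqvGen (r := Beta) _ _
      (reflTransGen_closed (fun _ _ => Par.reflTransGen_beta) _ _ h)
  exact .trans _ _ _ (hβ ha) (.symm _ _ (hβ hb))

theorem BetaEq.exists_whRed_iParS {t v : Lam} (h : BetaEq t v) :
    ∃ L d, WHRed t L ∧ ReflTransGen IPar L d ∧ ReflTransGen Par v d := by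
  obtain ⟨d, htd, hvd⟩ := h.exists_parS
  obtain ⟨L, hL, hLd⟩ := exists_whRed_iParS_of_parS htd
  exact ⟨L, d, hL, hLd, hvd⟩

theorem var_parS_inv {n : ℕ} {d : Lam} (h : ReflTransGen Par (.var n) d) : d = .var n := by
  induction h with
  | refl => rfl
  | tail _ hp ih => subst ih; cases hp; rfl

theorem lam_parS_inv {b d : Lam} (h : ReflTransGen Par (.lam b) d) :
    ∃ b', d = .lam b' ∧ ReflTransGen Par b b' := by
  induction h with
  | refl => exact ⟨b, rfl, .refl⟩
  | tail _ hp ih =>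
    obtain ⟨b₁, rfl, hb₁⟩ := ih
    cases hp with
    | lam hp => exact ⟨_, rfl, hb₁.tail hp⟩

theorem app_var_parS_inv {j : ℕ} {e d : Lam} (h : ReflTransGen Par (.app (.var j) e) d) :
    ∃ e', d = .app (.var j) e' ∧ ReflTransGen Par e e' := by
  induction h with
  | refl => exact ⟨e, rfl, .refl⟩
  | tail _ hp ih =>
    obtain ⟨e₁, rfl, he₁⟩ := ih
    cases hp with
    | app hj he => cases hj; exact ⟨_, rfl, he₁.tail he⟩

theorem iParS_var_inv {L : Lam} {n : ℕ} (h : ReflTransGen IPar L (.var n)) : L = .var n := by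
  induction h using ReflTransGen.head_induction_on with
  | refl => rfl
  | head hp _ ih =>
    subst ih
    cases hp with
    | spine hp => cases hp; rfl

theorem iParS_lam_inv {L b : Lam} (h : ReflTransGen IPar L (.lam b)) :
    ∃ a, L = .lam a ∧ ReflTransGen Par a b := by
  induction h using ReflTransGen.head_induction_on with
  | refl => exact ⟨b, rfl, .refl⟩
  | head hp _ ih =>
    obtain ⟨a₁, rfl, ha₁⟩ := ih
    cases hp with
    | spine hp => cases hp
    | lam hp => exact ⟨_, rfl, .head hp ha₁⟩

theorem iParS_app_var_inv {L e : Lam} {j : ℕ} (h : ReflTransGen IPar L (.app (.var j) e)) :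
    ∃ a, L = .app (.var j) a ∧ ReflTransGen Par a e := by
  induction h using ReflTransGen.head_induction_on with
  | refl => exact ⟨e, rfl, .refl⟩
  | head hp _ ih =>
    obtain ⟨a₁, rfl, ha₁⟩ := ih
    cases hp with
    | spine hp =>
      cases hp with
      | app hj ha => cases hj; exact ⟨_, rfl, .head ha ha₁⟩

theorem whRed_var_of_betaEq {t : Lam} {n : ℕ} (h : BetaEq t (.var n)) : WHRed t (.var n) := by
  obtain ⟨L, d, hL, hLd, hd⟩ := h.exists_whRed_iParS
  obtain rfl := var_parS_inv hd
  obtain rfl := iParS_var_inv hLd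
  exact hL

theorem exists_whRed_lam_of_betaEq {t b : Lam} (h : BetaEq t (.lam b)) :
    ∃ a, WHRed t (.lam a) ∧ BetaEq a b := by
  obtain ⟨L, d, hL, hLd, hd⟩ := h.exists_whRed_iParS
  obtain ⟨b', rfl, hb⟩ := lam_parS_inv hd
  obtain ⟨a, rfl, ha⟩ := iParS_lam_inv hLd
  exact ⟨a, hL, .of_parS_of_parS ha hb⟩

theorem exists_whRed_app_var_of_betaEq {t e : Lam} {j : ℕ} (h : BetaEq t (.app (.var j) e)) :
    ∃ a, WHRed t (.app (.var j) a) ∧ BetaEq a e := by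
  obtain ⟨L, d, hL, hLd, hd⟩ := h.exists_whRed_iParS
  obtain ⟨e', rfl, he⟩ := app_var_parS_inv hd
  obtain ⟨a, rfl, ha⟩ := iParS_app_var_inv hLd
  exact ⟨a, hL, .of_parS_of_parS ha he⟩

theorem subst_churchBody {σ : ℕ → Lam} (h₀ : σ 0 = .var 0) (h₁ : σ 1 = .var 1) (n : ℕ) :
    (churchBody n).subst σ = churchBody n := by
  induction n with
  | zero => exact h₁
  | succ n ih => simp only [churchBody, Lam.subst, h₀, ih]

theorem succIter_eq_iterate (n : ℕ) : succIter n = (Lam.app csucc)^[n] czero := by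
  induction n with
  | zero => rfl
  | succ n ih => rw [Function.iterate_succ_apply', ← ih]; rfl

theorem whRed_T2_app (θ u : Lam) :
    WHRed (.app (.app T2 θ) u) (.app (.app (.app θ u) Fop) czero) := by
  refine .head (.app u (.beta _ θ)) (.head (.beta _ u) ?_)
  show WHRed (.app (.app (.app ((θ.lift 0).subst0 u) u) Fop) czero) _
  rw [Lam.lift_zero_subst0]

theorem whRed_Fop_app (x y : Lam) : WHRed (.app (.app Fop x) y) (.app x (.app csucc y)) := by
  refine .head (.app y (.beta _ x)) (.head (.beta _ y) ?_)
  show WHRed (.app ((x.lift 0).subst0 y) (.app csucc y)) _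
  rw [Lam.lift_zero_subst0]

-- `subst0 Fop` turns the numeral's `f = var 0` into `F` and its `x = var 1` into the outer `f`.
theorem whRed_subst0_Fop_app {k : ℕ} {t : Lam} (ht : BetaEq t (churchBody k)) (ν : Lam) :
    WHRed (.app (t.subst0 Fop) ν) (.app (.var 0) ((Lam.app csucc)^[k] ν)) := by
  induction k generalizing t ν with
  | zero => exact ((whRed_var_of_betaEq ht).subst _).app_left ν
  | succ k ih =>
    obtain ⟨e, hte, he⟩ := exists_whRed_app_var_of_betaEq ht
    calc Lam.app (t.subst0 Fop) ν
        ≻ʷ .app (.app Fop (e.subst0 Fop)) ν := (hte.subst _).app_left ν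
      _ ≻ʷ .app (e.subst0 Fop) (.app csucc ν) := whRed_Fop_app _ _
      _ ≻ʷ _ := ih he _

/-- For every `n` and every `θ ≃β n̲`, `(T₂)θf ≻ (f)(s̲)ⁿ0̲` (with `f = var 0`). -/
theorem T2_head_reduction (n : ℕ) (θ : Lam) (h : BetaEq θ (church n)) :
    HRed (.app (.app T2 θ) (.var 0)) (.app (.var 0) (succIter n)) := by
  obtain ⟨θ₀, hθ, hθ₀⟩ := exists_whRed_lam_of_betaEq h
  have hθ₀f : BetaEq (θ₀.subst0 (.var 0)) (.lam (churchBody n)) := by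
    have := hθ₀.subst (Lam.single (.var 0))
    rwa [Lam.subst, subst_churchBody (σ := Lam.up _) rfl rfl] at this
  obtain ⟨θ₁, hθ₁, hθ₁n⟩ := exists_whRed_lam_of_betaEq hθ₀f
  rw [succIter_eq_iterate]
  refine WHRed.hRed ?_
  calc Lam.app (.app T2 θ) (.var 0)
      ≻ʷ .app (.app (.app θ (.var 0)) Fop) czero := whRed_T2_app θ _
    _ ≻ʷ .app (.app (.app (.lam θ₀) (.var 0)) Fop) czero :=
        ((hθ.app_left _).app_left _).app_left _
    _ ≻ʷ .app (.app (θ₀.subst0 (.var 0)) Fop) czero := .single (.app _ (.app _ (.beta _ _)))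
    _ ≻ʷ .app (.app (.lam θ₁) Fop) czero := (hθ₁.app_left _).app_left _
    _ ≻ʷ .app (θ₁.subst0 Fop) czero := .single (.app _ (.beta _ _))
    _ ≻ʷ _ := whRed_subst0_Fop_app hθ₁n czero
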